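/- Let Y ⊆ ℝⁿ be nonempty and Φ₁, Φ₂ : Y → I(ℝ) be interval-valued functions that are gH-weak subdifferentiable at u ∈ Y. Suppose u is a weak efficient point of the interval-valued function y ↦ Φ₂(y) ⊖_gH Φ₁(y), and Φ₁(u) = Φ₂(u). Then ∂ʷΦ₁(u) ⊆ ∂ʷΦ₂(u), i.e., every gH-weak subgradient of Φ₁ at u is a gH-weak subgradient of Φ₂ at u. -/

import Mathlib

structure IInt where
  lo : ℝ
  hi : ℝ
  isLe : lo ≤ hi

namespace IInt

/-- Dominance order on intervals: `[a,b] ⪯ [c,d]` iff `a ≤ c` and `b ≤ d`. -/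
def ile (X Y : IInt) : Prop := X.lo ≤ Y.lo ∧ X.hi ≤ Y.hi

def add (X Y : IInt) : IInt := ⟨X.lo + Y.lo, X.hi + Y.hi, add_le_add X.isLe Y.isLe⟩

/-- gH-difference `⊖_gH`. -/
def gH (X Y : IInt) : IInt :=
  ⟨min (X.lo - Y.lo) (X.hi - Y.hi), max (X.lo - Y.lo) (X.hi - Y.hi), min_le_max⟩

def smul (l : ℝ) (X : IInt) : IInt :=
  ⟨min (l * X.lo) (l * X.hi), max (l * X.lo) (l * X.hi), min_le_max⟩

def subset (X Y : IInt) : Prop := Y.lo ≤ X.lo ∧ X.hi ≤ Y.hi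

def inorm (X : IInt) : ℝ := max |X.lo| |X.hi|

def ofReal (r : ℝ) : IInt := ⟨r, r, le_refl r⟩

def width (X : IInt) : ℝ := X.hi - X.lo

end IInt

/-- The product `Ĝ⊤ ⊙ d` of an interval vector and a real vector. -/
def iprod {n : ℕ} (G : Fin n → IInt) (d : EuclideanSpace ℝ (Fin n)) : IInt :=
  ⟨∑ i, min (d i * (G i).lo) (d i * (G i).hi),
   ∑ i, max (d i * (G i).lo) (d i * (G i).hi),
   Finset.sum_le_sum fun _ _ => min_le_max⟩

/-- `(Ĝ, c)` is a gH-weak subgradient of `Φ` at `u` relative to `Y`. -/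
def IsWeakSubgrad {n : ℕ} (Y : Set (EuclideanSpace ℝ (Fin n)))
    (Φ : EuclideanSpace ℝ (Fin n) → IInt) (u : EuclideanSpace ℝ (Fin n))
    (G : Fin n → IInt) (c : ℝ) : Prop :=
  0 ≤ c ∧ ∀ y ∈ Y,
    IInt.ile (IInt.gH (iprod G (y - u)) (IInt.ofReal (c * ‖y - u‖))) (IInt.gH (Φ y) (Φ u))

/-- `(Ĥ, c')` belongs to the augmented normal cone to `Y` at `u`. -/
def InAugNormalCone {n : ℕ} (Y : Set (EuclideanSpace ℝ (Fin n)))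
    (u : EuclideanSpace ℝ (Fin n)) (H : Fin n → IInt) (c' : ℝ) : Prop :=
  0 ≤ c' ∧ ∀ y ∈ Y,
    IInt.ile (IInt.gH (iprod H (y - u)) (IInt.ofReal (c' * ‖y - u‖))) (IInt.ofReal 0)

/-!
With `Φ₁(u) = Φ₂(u)`, weak efficiency of `u` for `Φ₂ ⊖_gH Φ₁` says `[0,0] ⪯ Φ₂(y) ⊖_gH Φ₁(y)`,
i.e. `Φ₁(y) ⪯ Φ₂(y)` for every `y ∈ Y`. Since `⊖_gH` is monotone in its first argument, the
increments `Φ₁(y) ⊖_gH Φ₁(u) ⪯ Φ₂(y) ⊖_gH Φ₂(u)`, so any lower estimate of the increments of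
`Φ₁` is one of `Φ₂`.
-/

namespace IInt

theorem ile_trans {X Y Z : IInt} (hXY : ile X Y) (hYZ : ile Y Z) : ile X Z :=
  ⟨hXY.1.trans hYZ.1, hXY.2.trans hYZ.2⟩

theorem gH_self (X : IInt) : gH X X = ofReal 0 := by
  simp only [gH, ofReal, sub_self, min_self, max_self]

theorem ile_of_zero_ile_gH {X Y : IInt} (h : ile (ofReal 0) (gH X Y)) : ile Y X := by
  obtain ⟨hlo, hhi⟩ := le_min_iff.mp h.1
  exact ⟨sub_nonneg.mp hlo, sub_nonneg.mp hhi⟩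

theorem gH_mono_left {X X' : IInt} (Z : IInt) (h : ile X X') : ile (gH X Z) (gH X' Z) :=
  ⟨min_le_min (sub_le_sub_right h.1 _) (sub_le_sub_right h.2 _),
   max_le_max (sub_le_sub_right h.1 _) (sub_le_sub_right h.2 _)⟩

end IInt

theorem IsWeakSubgrad.of_gH_ile {n : ℕ} {Y : Set (EuclideanSpace ℝ (Fin n))}
    {Φ₁ Φ₂ : EuclideanSpace ℝ (Fin n) → IInt} {u : EuclideanSpace ℝ (Fin n)}
    {G : Fin n → IInt} {c : ℝ} (hG : IsWeakSubgrad Y Φ₁ u G c)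
    (hΦ : ∀ y ∈ Y, IInt.ile (IInt.gH (Φ₁ y) (Φ₁ u)) (IInt.gH (Φ₂ y) (Φ₂ u))) :
    IsWeakSubgrad Y Φ₂ u G c :=
  ⟨hG.1, fun y hy => IInt.ile_trans (hG.2 y hy) (hΦ y hy)⟩

theorem stmt_16_general {n : ℕ} (Y : Set (EuclideanSpace ℝ (Fin n)))
    (Φ₁ Φ₂ : EuclideanSpace ℝ (Fin n) → IInt) (u : EuclideanSpace ℝ (Fin n))
    (hweak : ∀ y ∈ Y, IInt.ile (IInt.gH (Φ₂ u) (Φ₁ u)) (IInt.gH (Φ₂ y) (Φ₁ y)))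
    (heq : Φ₁ u = Φ₂ u) :
    ∀ G c, IsWeakSubgrad Y Φ₁ u G c → IsWeakSubgrad Y Φ₂ u G c := by
  intro G c hG
  refine hG.of_gH_ile fun y hy => ?_
  have hΦ : IInt.ile (Φ₁ y) (Φ₂ y) := by
    have hy := hweak y hy
    rw [heq, IInt.gH_self] at hy
    exact IInt.ile_of_zero_ile_gH hy
  rw [← heq]
  exact IInt.gH_mono_left _ hΦ

/-- if `Φ₁, Φ₂` are gH-weak subdifferentiable at `u`, `u` is a weak efficient
point of `Φ₂ ⊖_gH Φ₁`, and `Φ₁(u) = Φ₂(u)`, then `∂ʷΦ₁(u) ⊆ ∂ʷΦ₂(u)`. -/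
theorem stmt_16 {n : ℕ} (Y : Set (EuclideanSpace ℝ (Fin n))) (hY : Y.Nonempty)
    (Φ₁ Φ₂ : EuclideanSpace ℝ (Fin n) → IInt) (u : EuclideanSpace ℝ (Fin n)) (hu : u ∈ Y)
    (h1 : ∃ G c, IsWeakSubgrad Y Φ₁ u G c) (h2 : ∃ G c, IsWeakSubgrad Y Φ₂ u G c)
    (hweak : ∀ y ∈ Y, IInt.ile (IInt.gH (Φ₂ u) (Φ₁ u)) (IInt.gH (Φ₂ y) (Φ₁ y)))
    (heq : Φ₁ u = Φ₂ u) :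
    ∀ G c, IsWeakSubgrad Y Φ₁ u G c → IsWeakSubgrad Y Φ₂ u G c :=
  stmt_16_general Y Φ₁ Φ₂ u hweak heq
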